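/- arXiv:2512.20882 — 2 statements merged into one kernel-verified Lean document; each statement's English description precedes it below -/
import Mathlib

section
/- Let (G_n) be an LRB and let g : ℕ → ℂ be a G-multiplicative function with |g(n)| ≤ 1 for all n ∈ ℕ. If the limit ℓ := lim_{k→∞} (1/G_k)·∑_{n<G_k} g(n) exists, then lim_{N→∞} (1/N)·∑_{n<N} g(n) also exists and equals ℓ. -/
open Finset Filter Topology
open scoped Classical

noncomputable section

/-- A nondecreasing, right-continuous function `F : ℝ → [0,1]` with limits 0 at -∞ and 1 at +∞. -/
def IsDF (F : ℝ → ℝ) : Prop :=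
  Monotone F ∧ (∀ x, ContinuousWithinAt F (Set.Ici x) x) ∧
    (∀ x, F x ∈ Set.Icc (0 : ℝ) 1) ∧
    Filter.Tendsto F Filter.atBot (nhds 0) ∧ Filter.Tendsto F Filter.atTop (nhds 1)

/-- `f : ℕ → ℝ` has a distribution function. -/
def HasDF (f : ℕ → ℝ) : Prop :=
  ∃ F : ℝ → ℝ, IsDF F ∧ ∀ z : ℝ, ContinuousAt F z →
    Filter.Tendsto
      (fun N : ℕ => (((Finset.range N).filter fun n => f n ≤ z).card : ℝ) / (N : ℝ))
      Filter.atTop (nhds (F z))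

/-- Convergence (of partial sums) of a real series. -/
def SeriesConverges (u : ℕ → ℝ) : Prop :=
  ∃ L : ℝ, Filter.Tendsto (fun N : ℕ => ∑ n ∈ Finset.range N, u n) Filter.atTop (nhds L)

/-- Convergence (of partial sums) of a complex series. -/
def CSeriesConverges (u : ℕ → ℂ) : Prop :=
  ∃ L : ℂ, Filter.Tendsto (fun N : ℕ => ∑ n ∈ Finset.range N, u n) Filter.atTop (nhds L)

/-- `g_t(n) = exp(i t f(n))`. -/
def Gexp (f : ℕ → ℝ) (t : ℝ) (n : ℕ) : ℂ :=
  Complex.exp (Complex.I * (t : ℂ) * (f n : ℂ))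

/-- `H_n(t) = ∑_{m < G_n} exp(i t f(m))`. -/
def HH (G : ℕ → ℕ) (f : ℕ → ℝ) (t : ℝ) (n : ℕ) : ℂ :=
  ∑ m ∈ Finset.range (G n), Gexp f t m

/-- Block ratios `r_0(t) = 1`, `r_j(t) = H_j(t)/H_{j-1}(t)`. -/
def rr (G : ℕ → ℕ) (f : ℕ → ℝ) (t : ℝ) (j : ℕ) : ℂ :=
  if j = 0 then 1 else HH G f t j / HH G f t (j - 1)

/-- Companion matrix of the recurrence: first row `(a 0, …, a (d-1))`, ones on the subdiagonal. -/
def companionMat (d : ℕ) (a : ℕ → ℕ) : Matrix (Fin d) (Fin d) ℕ :=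
  Matrix.of fun i j => if (i : ℕ) = 0 then a j else if (j : ℕ) + 1 = (i : ℕ) then 1 else 0

/-- A linear recurrence base (LRB). -/
structure LRB where
  d : ℕ
  a : ℕ → ℕ
  G : ℕ → ℕ
  e : ℕ → ℕ → ℕ
  α : ℝ
  κ : ℝ
  hd : 2 ≤ d
  ha : ∀ j, j < d → 1 ≤ a j
  hG0 : G 0 = 1
  hGinit : ∀ k, 0 < k → k < d → G k = (∑ i ∈ Finset.range k, a i * G (k - 1 - i)) + 1
  hGrec : ∀ n, G (n + d) = ∑ i ∈ Finset.range d, a i * G (n + d - 1 - i)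
  hdig_le : ∀ n k, e n k ≤ (Finset.range d).sup a
  hdig_fin : ∀ n, ∃ K, ∀ k, K ≤ k → e n k = 0
  hdig_sum : ∀ n K, (∀ k, K ≤ k → e n k = 0) → n = ∑ k ∈ Finset.range K, e n k * G k
  hdig_greedy : ∀ n K, (∑ k ∈ Finset.range K, e n k * G k) < G K
  hprim : ∃ m, ∀ i j : Fin d, 0 < ((companionMat d a) ^ m) i j
  hα : 1 < α
  hαroot : α ^ d = ∑ j ∈ Finset.range d, (a j : ℝ) * α ^ (d - 1 - j)
  hPV : ∀ z : ℂ, z ^ d = ∑ j ∈ Finset.range d, (a j : ℂ) * z ^ (d - 1 - j) →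
      z ≠ (α : ℂ) → ‖z‖ < 1
  hκ : 0 < κ
  hκlim : Filter.Tendsto (fun n => (G n : ℝ) / α ^ n) Filter.atTop (nhds κ)

/-- `𝔞 = max_{j < d} a_j`. -/
def LRB.amax (B : LRB) : ℕ := (Finset.range B.d).sup B.a

/-- `f` is G-additive. -/
def GAdditive (B : LRB) (f : ℕ → ℝ) : Prop :=
  f 0 = 0 ∧ ∀ n K, (∀ k, K ≤ k → B.e n k = 0) →
    f n = ∑ k ∈ Finset.range K, f (B.e n k * B.G k)

/-- `g` is G-multiplicative. -/
def GMultiplicative (B : LRB) (g : ℕ → ℂ) : Prop :=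
  g 0 = 1 ∧ ∀ n K, (∀ k, K ≤ k → B.e n k = 0) →
    g n = ∏ k ∈ Finset.range K, g (B.e n k * B.G k)

/-- The `n`-th summand of the first canonical series (S1). -/
def S1Term (B : LRB) (f : ℕ → ℝ) (n : ℕ) : ℝ :=
  ∑ j ∈ Finset.range B.d, (B.α ^ j)⁻¹ *
    ∑ k ∈ Finset.range (B.a j),
      (f (k * B.G (n + B.d - j)) + ∑ l ∈ Finset.range j, f (B.a l * B.G (n + B.d - l)))

/-- The `n`-th summand of the second canonical series (S2). -/
def S2Term (B : LRB) (f : ℕ → ℝ) (n : ℕ) : ℝ :=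
  ∑ k ∈ Finset.Icc 1 B.amax, f (k * B.G n) ^ 2

/-- Hypothesis (H_f): `f(c G_k) → 0` for each `1 ≤ c ≤ 𝔞`. -/
def HfHyp (B : LRB) (f : ℕ → ℝ) : Prop :=
  ∀ c : ℕ, 1 ≤ c → c ≤ B.amax →
    Filter.Tendsto (fun k => f (c * B.G k)) Filter.atTop (nhds 0)

/-- `ϑ_{q,ℓ} = ∑_{j<ℓ} a_j G_{q-j}`. -/
def thetaB (B : LRB) (q l : ℕ) : ℕ := ∑ j ∈ Finset.range l, B.a j * B.G (q - j)

/-- `σ_{q,ℓ}(t) = ∑_{h < a_ℓ} g_t(h G_{q-ℓ})`. -/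
def sigmaB (B : LRB) (f : ℕ → ℝ) (t : ℝ) (q l : ℕ) : ℂ :=
  ∑ h ∈ Finset.range (B.a l), Gexp f t (h * B.G (q - l))

/-- `u_k(t)`. -/
def uB (B : LRB) (f : ℕ → ℝ) (t : ℝ) (k : ℕ) : ℂ :=
  ((B.α : ℂ)) ^ B.d * ∑ l ∈ Finset.range B.d,
    (Gexp f t (thetaB B (k - 1) l) * sigmaB B f t (k - 1) l - (B.a l : ℂ)) /
      ((B.α : ℂ)) ^ (l + 1)

/-- `ε_k(t) = r_k(t) - α`. -/
def epsB (B : LRB) (f : ℕ → ℝ) (t : ℝ) (k : ℕ) : ℂ :=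
  rr B.G f t k - (B.α : ℂ)

/-- Block energy `Q_n`. -/
def QB (B : LRB) (f : ℕ → ℝ) (n : ℕ) : ℝ :=
  ∑ r ∈ Finset.range B.d, ∑ c ∈ Finset.Icc 1 B.amax, f (c * B.G (n - r)) ^ 2

/-- First-row coefficients `c_{n,ℓ}(t)`. -/
def cB (B : LRB) (f : ℕ → ℝ) (n l : ℕ) (t : ℝ) : ℂ :=
  if l = 0 then sigmaB B f t n 0 else Gexp f t (thetaB B n l) * sigmaB B f t n l

/-- The companion-type matrix `A_n(t)`. -/
def AnB (B : LRB) (f : ℕ → ℝ) (n : ℕ) (t : ℝ) : Matrix (Fin B.d) (Fin B.d) ℂ :=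
  Matrix.of fun i j => if (i : ℕ) = 0 then cB B f n (j : ℕ) t
    else if (j : ℕ) + 1 = (i : ℕ) then 1 else 0

/-- `ν` is a norm on `ℂ^d`. -/
def IsNormOn (d : ℕ) (ν : (Fin d → ℂ) → ℝ) : Prop :=
  (∀ x, 0 ≤ ν x) ∧ (∀ x, ν x = 0 ↔ x = 0) ∧
    (∀ x y, ν (x + y) ≤ ν x + ν y) ∧ ∀ (c : ℂ) (x), ν (c • x) = ‖c‖ * ν x

/-- The block vector `𝐇_N(t) = (H_N(t), …, H_{N-d+1}(t))`. -/
def HVec (B : LRB) (f : ℕ → ℝ) (t : ℝ) (N : ℕ) : Fin B.d → ℂ :=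
  fun i => HH B.G f t (N - (i : ℕ))

/-!
Write `S(N) = ∑_{n<N} g(n)` and `D(N) = ‖S(N) - ℓN‖`. For `G_K ≤ N < G_{K+1}` write
`N = E G_K + x` with `x < G_K`. By uniqueness of greedy expansions the digits of `c G_K + r` are
those of `r` together with the top digit `c`, so `S(N) = (∑_{c<E} g(c G_K)) S(G_K) + g(E G_K) S(x)`.

If `ℓ ≠ 0`, this identity for `N = G_{K+1} = Q G_K + R` shows that `∑_{c<Q} g(c G_K)` has modulus
close to `Q`, which forces `g(c G_K) → 1` for every non-maximal top digit `c < Q`. Hence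
`D(N) ≤ D(x) + o(G_K)` when `E < Q`. When `E = Q` the same identity bounds the defect of
`g(Q G_K)` by `D(R)`, so an a priori bound `D ≤ μN + O(1)` gives `D(N) ≤ 2μx + o(G_K)`; on the other
hand `D(N) ≤ D(G_{K+1}) + 2(R - x)`. Together these improve `D(N) ≤ μN + O(1)` to
`D(N) ≤ (2μ/(μ+2) + o(1)) N`, and as `μ ↦ 2μ/(μ+2)` has no fixed point in `(0, 2]`,
`limsup D(N)/N = 0`.
-/

theorem eq_of_sum_range_mul_eq {G f₁ f₂ : ℕ → ℕ} {K : ℕ}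
    (h₁ : ∀ j < K, ∑ k ∈ range j, f₁ k * G k < G j)
    (h₂ : ∀ j < K, ∑ k ∈ range j, f₂ k * G k < G j)
    (h : ∑ k ∈ range K, f₁ k * G k = ∑ k ∈ range K, f₂ k * G k) :
    ∀ k < K, f₁ k = f₂ k := by
  induction K with
  | zero => simp
  | succ K ih =>
    rw [sum_range_succ, sum_range_succ] at h
    have hK₁ := h₁ K K.lt_succ_self
    have hK₂ := h₂ K K.lt_succ_self
    have htop : f₁ K = f₂ K := by
      have hG : 0 < G K := (Nat.zero_le _).trans_lt hK₁
      simpa [Nat.add_mul_div_right _ _ hG, Nat.div_eq_of_lt hK₁, Nat.div_eq_of_lt hK₂] using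
        congrArg (· / G K) h
    intro k hk
    rcases Nat.lt_succ_iff_lt_or_eq.mp hk with hk | rfl
    · exact ih (fun j hj => h₁ j (hj.trans K.lt_succ_self))
        (fun j hj => h₂ j (hj.trans K.lt_succ_self)) (by rw [htop] at h; omega) k hk
    · exact htop

structure IsBoundedRatioScale (G : ℕ → ℕ) (A : ℕ) : Prop where
  zero_lt : 0 < G 0
  strictMono : StrictMono G
  succ_le : ∀ k, G (k + 1) ≤ A * G k

structure IsBlockMultiplicative (G : ℕ → ℕ) (g : ℕ → ℂ) : Prop where
  map_zero : g 0 = 1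
  map_mul_add : ∀ ⦃K c r : ℕ⦄, r < G K → c * G K + r < G (K + 1) →
    g (c * G K + r) = g (c * G K) * g r

def partialSum (g : ℕ → ℂ) (N : ℕ) : ℂ := ∑ n ∈ range N, g n

def discrepancy (g : ℕ → ℂ) (ℓ : ℂ) (N : ℕ) : ℝ := ‖partialSum g N - ℓ * N‖

def blockSum (G : ℕ → ℕ) (g : ℕ → ℂ) (K E : ℕ) : ℂ := ∑ c ∈ range E, g (c * G K)

namespace IsBoundedRatioScale

variable {G : ℕ → ℕ} {A : ℕ}

theorem pos (hG : IsBoundedRatioScale G A) (k : ℕ) : 0 < G k :=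
  hG.zero_lt.trans_le (hG.strictMono.monotone k.zero_le)

theorem ratio_pos (hG : IsBoundedRatioScale G A) : 0 < A :=
  Nat.pos_of_ne_zero fun hA => (hG.pos 1).ne' (by simpa [hA] using hG.succ_le 0)

theorem le_of_mul_le (hG : IsBoundedRatioScale G A) {E k : ℕ} (h : E * G k ≤ G (k + 1)) :
    E ≤ A :=
  Nat.le_of_mul_le_mul_right (h.trans (hG.succ_le k)) (hG.pos k)

theorem eventually_le_mul (hG : IsBoundedRatioScale G A) {ε : ℝ} (hε : 0 < ε) (C : ℝ) :
    ∀ᶠ k in atTop, C ≤ ε * G k := by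
  have h := (tendsto_natCast_atTop_atTop.comp hG.strictMono.tendsto_atTop).const_mul_atTop hε
  exact h.eventually_ge_atTop C

theorem exists_mul_add_eq (hG : IsBoundedRatioScale G A) {K₀ N : ℕ} (hN : G K₀ ≤ N) :
    ∃ K, K₀ ≤ K ∧ ∃ E x, 0 < E ∧ x < G K ∧ E * G K + x = N ∧ N < G (K + 1) := by
  have hex : ∃ k, N < G k := ⟨N + 1, (Nat.lt_succ_self N).trans_le (hG.strictMono.id_le _)⟩
  have hK₀ : K₀ < Nat.find hex := by
    by_contra! h
    exact (Nat.find_spec hex).not_ge (hN.trans' (hG.strictMono.monotone h))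
  obtain ⟨K, hK⟩ : ∃ K, Nat.find hex = K + 1 := ⟨Nat.find hex - 1, by omega⟩
  have hGK : G K ≤ N := not_lt.mp (Nat.find_min hex (by omega))
  refine ⟨K, by omega, N / G K, N % G K, Nat.div_pos hGK (hG.pos K), Nat.mod_lt _ (hG.pos K),
    by rw [mul_comm]; exact Nat.div_add_mod N (G K), hK ▸ Nat.find_spec hex⟩

end IsBoundedRatioScale

namespace LRB

variable (B : LRB)

theorem G_succ_eq (k : ℕ) :
    B.G (k + 1) = ∑ i ∈ range (min (k + 1) B.d), B.a i * B.G (k - i) +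
      if k + 1 < B.d then 1 else 0 := by
  rcases lt_or_ge (k + 1) B.d with hk | hk
  · simp [B.hGinit (k + 1) k.succ_pos hk, min_eq_left hk.le, hk]
  · have h := B.hGrec (k + 1 - B.d)
    rw [Nat.sub_add_cancel hk] at h
    simp [h, min_eq_right hk, hk.not_gt]

theorem a_zero_mul_G_le_sum (k : ℕ) :
    B.a 0 * B.G k ≤ ∑ i ∈ range (min (k + 1) B.d), B.a i * B.G (k - i) :=
  single_le_sum (f := fun i => B.a i * B.G (k - i)) (fun _ _ => Nat.zero_le _)
    (mem_range.mpr (lt_min k.succ_pos (by linarith [B.hd])))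

theorem G_pos (k : ℕ) : 0 < B.G k := by
  induction k with
  | zero => simp [B.hG0]
  | succ k ih =>
    rw [G_succ_eq]
    exact (Nat.mul_pos (B.ha 0 (by linarith [B.hd])) ih).trans_le
      (le_add_right (B.a_zero_mul_G_le_sum k))

theorem G_lt_G_succ (k : ℕ) : B.G k < B.G (k + 1) := by
  have hd := B.hd
  have hG : B.G k ≤ B.a 0 * B.G k := Nat.le_mul_of_pos_left _ (B.ha 0 (by omega))
  have h0 := B.a_zero_mul_G_le_sum k
  rw [G_succ_eq]
  rcases lt_or_ge (k + 1) B.d with hk | hk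
  · simp only [hk, if_true]
    omega
  · have hpair : ({0, B.d - 1} : Finset ℕ) ⊆ range (min (k + 1) B.d) := by
      intro i; simp only [mem_insert, mem_singleton, mem_range]; omega
    have hsum := sum_le_sum_of_subset (f := fun i => B.a i * B.G (k - i)) hpair
    rw [sum_pair (by omega), Nat.sub_zero] at hsum
    have : 0 < B.a (B.d - 1) * B.G (k - (B.d - 1)) :=
      Nat.mul_pos (B.ha _ (by omega)) (B.G_pos _)
    simp only [hk.not_gt, if_false]
    omega

theorem strictMono_G : StrictMono B.G := strictMono_nat_of_lt_succ B.G_lt_G_succ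

theorem G_succ_le (k : ℕ) : B.G (k + 1) ≤ (∑ i ∈ range B.d, B.a i + 1) * B.G k := by
  rw [G_succ_eq, add_mul, sum_mul, one_mul]
  gcongr ?_ + ?_
  · calc ∑ i ∈ range (min (k + 1) B.d), B.a i * B.G (k - i)
        ≤ ∑ i ∈ range (min (k + 1) B.d), B.a i * B.G k := by
          gcongr with i; exact B.strictMono_G.monotone (Nat.sub_le k i)
      _ ≤ ∑ i ∈ range B.d, B.a i * B.G k :=
          sum_le_sum_of_subset (range_subset_range.mpr (min_le_right _ _))
  · split_ifs <;> simp [Nat.one_le_iff_ne_zero, (B.G_pos k).ne']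

theorem digit_eq_zero_of_lt {n K : ℕ} (hn : n < B.G K) {k : ℕ} (hk : K ≤ k) :
    B.e n k = 0 := by
  obtain ⟨K₀, hK₀⟩ := B.hdig_fin n
  by_contra hne
  have hsum := B.hdig_sum n (max K₀ (k + 1)) fun j hj => hK₀ j (le_of_max_le_left hj)
  have hle := single_le_sum (f := fun j => B.e n j * B.G j) (s := range (max K₀ (k + 1)))
    (fun _ _ => Nat.zero_le _) (mem_range.mpr (lt_max_of_lt_right k.lt_succ_self))
  have := B.strictMono_G.monotone hk
  have := Nat.le_mul_of_pos_left (B.G k) (Nat.pos_of_ne_zero hne)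
  omega

theorem sum_digits_of_lt {n K : ℕ} (hn : n < B.G K) : ∑ k ∈ range K, B.e n k * B.G k = n :=
  (B.hdig_sum n K fun _ => B.digit_eq_zero_of_lt hn).symm

theorem digits_mul_add {K c r : ℕ} (hr : r < B.G K) (h : c * B.G K + r < B.G (K + 1)) :
    B.e (c * B.G K + r) = Function.update (B.e r) K c := by
  have hlow : ∀ j ≤ K, ∑ k ∈ range j, Function.update (B.e r) K c k * B.G k =
      ∑ k ∈ range j, B.e r k * B.G k := fun j hj =>
    sum_congr rfl fun k hk => by
      rw [Function.update_of_ne (by have := mem_range.mp hk; omega)]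
  funext k
  rcases lt_or_ge k (K + 1) with hk | hk
  · refine eq_of_sum_range_mul_eq (fun j _ => B.hdig_greedy _ j) (fun j hj => ?_) ?_ k hk
    · rw [hlow j (Nat.lt_succ_iff.mp hj)]
      exact B.hdig_greedy r j
    · rw [B.sum_digits_of_lt h, sum_range_succ, hlow K le_rfl, B.sum_digits_of_lt hr,
        Function.update_self]
      ring
  · rw [B.digit_eq_zero_of_lt h hk, Function.update_of_ne (by omega),
      B.digit_eq_zero_of_lt hr (by omega)]

theorem isBoundedRatioScale : IsBoundedRatioScale B.G (∑ i ∈ range B.d, B.a i + 1) :=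
  ⟨B.G_pos 0, B.strictMono_G, B.G_succ_le⟩

end LRB

theorem GMultiplicative.isBlockMultiplicative {B : LRB} {g : ℕ → ℂ}
    (hg : GMultiplicative B g) : IsBlockMultiplicative B.G g := by
  refine ⟨hg.1, fun K c r hr h => ?_⟩
  rw [hg.2 _ (K + 1) fun _ => B.digit_eq_zero_of_lt h, hg.2 r K fun _ => B.digit_eq_zero_of_lt hr,
    B.digits_mul_add hr h, prod_range_succ, Function.update_self, mul_comm]
  congr 1
  exact prod_congr rfl fun k hk => by rw [Function.update_of_ne (mem_range.mp hk).ne]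

section PartialSums

variable {g : ℕ → ℂ} {ℓ : ℂ}

theorem norm_partialSum_sub_le (hbd : ∀ n, ‖g n‖ ≤ 1) {M N : ℕ} (h : M ≤ N) :
    ‖partialSum g N - partialSum g M‖ ≤ N - M := by
  obtain ⟨k, rfl⟩ := Nat.exists_eq_add_of_le h
  rw [partialSum, partialSum, sum_range_add, add_sub_cancel_left, Nat.cast_add, add_sub_cancel_left]
  exact (norm_sum_le _ _).trans (by simpa using sum_le_sum (s := range k) fun n _ => hbd (M + n))

theorem norm_partialSum_le (hbd : ∀ n, ‖g n‖ ≤ 1) (N : ℕ) :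
    ‖partialSum g N‖ ≤ N := by
  simpa [partialSum] using norm_partialSum_sub_le hbd N.zero_le

theorem abs_discrepancy_sub_le (hbd : ∀ n, ‖g n‖ ≤ 1) (hℓ : ‖ℓ‖ ≤ 1) {M N : ℕ}
    (h : M ≤ N) :
    |discrepancy g ℓ N - discrepancy g ℓ M| ≤ 2 * (N - M) := by
  have hNM : (0 : ℝ) ≤ N - M := sub_nonneg.mpr (Nat.cast_le.mpr h)
  calc |discrepancy g ℓ N - discrepancy g ℓ M|
      ≤ ‖(partialSum g N - partialSum g M) - ℓ * ((N : ℂ) - M)‖ := by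
        have : partialSum g N - partialSum g M - ℓ * ((N : ℂ) - M) =
            (partialSum g N - ℓ * N) - (partialSum g M - ℓ * M) := by ring
        rw [this]
        exact abs_norm_sub_norm_le _ _
    _ ≤ (N - M) + 1 * (N - M) := by
        refine (norm_sub_le _ _).trans (add_le_add (norm_partialSum_sub_le hbd h) ?_)
        rw [norm_mul, ← Nat.cast_sub h, Complex.norm_natCast, Nat.cast_sub h]
        exact mul_le_mul_of_nonneg_right hℓ hNM
    _ = 2 * (N - M) := by ring

theorem discrepancy_le (hbd : ∀ n, ‖g n‖ ≤ 1) (hℓ : ‖ℓ‖ ≤ 1) (N : ℕ) :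
    discrepancy g ℓ N ≤ 2 * N := by
  simpa [discrepancy, partialSum] using (abs_le.mp (abs_discrepancy_sub_le hbd hℓ N.zero_le)).2

theorem discrepancy_div_eq {N : ℕ} (hN : N ≠ 0) :
    discrepancy g ℓ N / N = ‖(N : ℂ)⁻¹ * partialSum g N - ℓ‖ := by
  have hN' : (N : ℂ) ≠ 0 := Nat.cast_ne_zero.mpr hN
  rw [discrepancy, div_eq_inv_mul, ← Complex.norm_natCast, ← norm_inv, ← norm_mul, mul_sub,
    mul_left_comm, inv_mul_cancel₀ hN', mul_one]

theorem norm_inv_mul_partialSum_le (hbd : ∀ n, ‖g n‖ ≤ 1) (N : ℕ) :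
    ‖(N : ℂ)⁻¹ * partialSum g N‖ ≤ 1 := by
  rw [norm_mul, norm_inv, Complex.norm_natCast]
  exact inv_mul_le_one_of_le₀ (norm_partialSum_le hbd N) N.cast_nonneg

end PartialSums

theorem sum_range_mul_add {M : Type*} [AddCommMonoid M] (f : ℕ → M) (E m x : ℕ) :
    ∑ n ∈ range (E * m + x), f n =
      ∑ c ∈ range E, ∑ j ∈ range m, f (c * m + j) + ∑ j ∈ range x, f (E * m + j) := by
  rw [sum_range_add]
  congr 1
  induction E with
  | zero => simp
  | succ E ih => rw [add_mul, one_mul, sum_range_add, ih, sum_range_succ]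

section BlockEstimates

variable {G : ℕ → ℕ} {g : ℕ → ℂ} {ℓ : ℂ}

theorem IsBlockMultiplicative.partialSum_mul_add (hg : IsBlockMultiplicative G g) {K E x : ℕ}
    (hx : x < G K) (h : E * G K + x ≤ G (K + 1)) :
    partialSum g (E * G K + x) =
      blockSum G g K E * partialSum g (G K) + g (E * G K) * partialSum g x := by
  rw [partialSum, sum_range_mul_add, blockSum, sum_mul, partialSum, partialSum, mul_sum]
  congr 1
  · refine sum_congr rfl fun c hc => ?_
    rw [mul_sum]
    refine sum_congr rfl fun j hj => hg.map_mul_add (mem_range.mp hj) ?_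
    have hcE : (c + 1) * G K ≤ E * G K := Nat.mul_le_mul_right _ (mem_range.mp hc)
    have := mem_range.mp hj
    rw [add_mul, one_mul] at hcE
    omega
  · refine sum_congr rfl fun j hj => hg.map_mul_add ((mem_range.mp hj).trans hx) ?_
    have := mem_range.mp hj
    omega

theorem IsBlockMultiplicative.discrepancy_mul_add_le (hg : IsBlockMultiplicative G g)
    (hbd : ∀ n, ‖g n‖ ≤ 1) {K E x : ℕ} (hx : x < G K) (h : E * G K + x ≤ G (K + 1)) :
    discrepancy g ℓ (E * G K + x) ≤
      ‖blockSum G g K E * partialSum g (G K) - ℓ * E * G K‖ + discrepancy g ℓ x +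
        ‖(g (E * G K) - 1) * ℓ‖ * x := by
  have hsplit : partialSum g (E * G K + x) - ℓ * ↑(E * G K + x) =
      (blockSum G g K E * partialSum g (G K) - ℓ * E * G K) +
        g (E * G K) * (partialSum g x - ℓ * x) + (g (E * G K) - 1) * ℓ * x := by
    rw [hg.partialSum_mul_add hx h]
    push_cast
    ring
  rw [discrepancy, hsplit, discrepancy]
  refine norm_add₃_le.trans (add_le_add (add_le_add le_rfl ?_) ?_)
  · exact (norm_mul_le _ _).trans (mul_le_of_le_one_left (norm_nonneg _) (hbd _))
  · rw [norm_mul _ (x : ℂ), Complex.norm_natCast]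

theorem norm_blockSum_mul_sub_le (hbd : ∀ n, ‖g n‖ ≤ 1) {K E : ℕ} {ε : ℝ}
    (hgc : ∀ c < E, ‖(g (c * G K) - 1) * ℓ‖ ≤ ε)
    (hD : discrepancy g ℓ (G K) ≤ ε * G K) :
    ‖blockSum G g K E * partialSum g (G K) - ℓ * E * G K‖ ≤ E * (2 * ε * G K) := by
  have hsplit : blockSum G g K E * partialSum g (G K) - ℓ * E * G K =
      ∑ c ∈ range E, (g (c * G K) * (partialSum g (G K) - ℓ * G K) +
        (g (c * G K) - 1) * ℓ * G K) := by
    have hterm : ∀ c, g (c * G K) * (partialSum g (G K) - ℓ * G K) +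
        (g (c * G K) - 1) * ℓ * G K = g (c * G K) * partialSum g (G K) - ℓ * G K := fun c => by
      ring
    simp only [hterm, blockSum, sum_mul, sum_sub_distrib, sum_const, card_range, nsmul_eq_mul]
    ring
  rw [hsplit]
  refine (norm_sum_le _ _).trans ?_
  calc ∑ c ∈ range E,
        ‖g (c * G K) * (partialSum g (G K) - ℓ * G K) + (g (c * G K) - 1) * ℓ * G K‖
      ≤ ∑ c ∈ range E, (1 * (ε * G K) + ε * G K) := by
        refine sum_le_sum fun c hc => (norm_add_le _ _).trans (add_le_add ?_ ?_)
        · rw [norm_mul]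
          exact mul_le_mul (hbd _) hD (norm_nonneg _) zero_le_one
        · rw [norm_mul _ (G K : ℂ), Complex.norm_natCast]
          exact mul_le_mul_of_nonneg_right (hgc c (mem_range.mp hc)) (Nat.cast_nonneg _)
    _ = E * (2 * ε * G K) := by simp only [one_mul, sum_const, card_range, nsmul_eq_mul]; ring

theorem norm_blockSum_le (hbd : ∀ n, ‖g n‖ ≤ 1) (K E : ℕ) :
    ‖blockSum G g K E‖ ≤ E :=
  (norm_sum_le _ _).trans (by simpa using sum_le_sum (s := range E) fun c _ => hbd (c * G K))

theorem norm_blockSum_le_norm_add (hbd : ∀ n, ‖g n‖ ≤ 1)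
    (hg0 : g 0 = 1) {k c E : ℕ} (hc : 0 < c) (hcE : c < E) :
    ‖blockSum G g k E‖ ≤ (E - 2 : ℝ) + ‖1 + g (c * G k)‖ := by
  have hpair : ({0, c} : Finset ℕ) ⊆ range E := by
    intro i; simp only [mem_insert, mem_singleton, mem_range]; omega
  rw [blockSum, ← sum_sdiff hpair, sum_pair hc.ne, zero_mul, hg0]
  refine (norm_add_le _ _).trans (add_le_add_left ((norm_sum_le _ _).trans ?_) _)
  refine (sum_le_sum fun i _ => hbd (i * G k)).trans ?_
  rw [sum_const, card_sdiff_of_subset hpair, card_range, card_pair hc.ne, nsmul_one,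
    Nat.cast_sub (by omega)]
  norm_num

end BlockEstimates

theorem mul_le_mul_add_of_mul_le {w μ x R c : ℝ} (hx : 0 ≤ x) (hxR : x ≤ R) (hc : 0 ≤ c)
    (h : w * R ≤ μ * R + c) : w * x ≤ μ * x + c := by
  rcases le_total w μ with hw | hw
  · nlinarith [mul_le_mul_of_nonneg_right hw hx]
  · nlinarith [mul_le_mul_of_nonneg_left hxR (sub_nonneg.mpr hw)]

theorem mul_le_contraction_mul {μ x y : ℝ} (hμ : 0 < μ) (hμ2 : μ ≤ 2) (hx : 0 ≤ x)
    (hxy : x ≤ y) : μ * x ≤ 2 * μ / (μ + 2) * (y + x) := by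
  rw [div_mul_eq_mul_div, le_div_iff₀ (by linarith)]
  nlinarith [mul_le_mul_of_nonneg_left hxy hμ.le,
    mul_le_mul_of_nonneg_right hμ2 (mul_nonneg hμ.le hx)]

-- The two bounds balance at `x = y / (μ + 1)`; this is where the factor `2μ/(μ+2)` comes from.
theorem le_contraction_mul_add {μ D x R y e : ℝ} (hμ : 0 < μ) (hRy : R ≤ y)
    (h₁ : D ≤ 2 * μ * x + e) (h₂ : D ≤ 2 * (R - x) + e) :
    D ≤ 2 * μ / (μ + 2) * (y + x) + e := by
  rw [div_mul_eq_mul_div, ← sub_le_iff_le_add, le_div_iff₀ (by linarith)]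
  nlinarith [mul_le_mul_of_nonneg_left (sub_le_iff_le_add.mpr h₂) hμ.le,
    mul_le_mul_of_nonneg_left hRy hμ.le]

theorem contraction_le_add {μ Λ η : ℝ} (hμ : 0 ≤ μ) (hΛ : 0 ≤ Λ) (hη : 0 ≤ η)
    (h : μ ≤ Λ + η) : 2 * μ / (μ + 2) ≤ 2 * Λ / (Λ + 2) + η := by
  rw [div_add' _ _ _ (by linarith), div_le_div_iff₀ (by linarith) (by linarith)]
  nlinarith [mul_nonneg hη (mul_nonneg hΛ hμ), mul_nonneg hη hΛ, mul_nonneg hη hμ]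

theorem tendsto_zero_of_eventually_le_contraction {u : ℕ → ℝ} (h0 : ∀ n, 0 ≤ u n)
    (h2 : ∀ n, u n ≤ 2)
    (himp : ∀ μ, 0 < μ → μ ≤ 2 → (∀ᶠ n in atTop, u n ≤ μ) →
      ∀ ε > 0, ∀ᶠ n in atTop, u n ≤ 2 * μ / (μ + 2) + ε) :
    Tendsto u atTop (𝓝 0) := by
  have hbdd : IsBoundedUnder (· ≤ ·) atTop u := isBoundedUnder_of ⟨2, h2⟩
  have hbdd' : IsBoundedUnder (· ≥ ·) atTop u := isBoundedUnder_of ⟨0, h0⟩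
  have hΛ0 : 0 ≤ limsup u atTop := le_limsup_of_frequently_le (Frequently.of_forall h0) hbdd
  have hfix : limsup u atTop ≤ 2 * limsup u atTop / (limsup u atTop + 2) := by
    refine le_of_forall_pos_le_add fun ε hε => ?_
    set μ := min (limsup u atTop + ε / 2) 2
    have hμ : 0 < μ := lt_min (by linarith) two_pos
    have hev : ∀ᶠ n in atTop, u n ≤ μ :=
      (eventually_lt_of_limsup_lt (lt_add_of_pos_right _ (half_pos hε)) hbdd).mono
        fun n hn => le_min hn.le (h2 n)
    calc limsup u atTop ≤ 2 * μ / (μ + 2) + ε / 2 :=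
          limsup_le_of_le hbdd'.isCoboundedUnder_le
            (himp μ hμ (min_le_right _ _) hev _ (half_pos hε))
      _ ≤ 2 * limsup u atTop / (limsup u atTop + 2) + ε / 2 + ε / 2 := by
          gcongr
          exact contraction_le_add hμ.le hΛ0 (half_pos hε).le (min_le_left _ _)
      _ = _ := by ring
  have hΛ : limsup u atTop ≤ 0 := by
    rw [le_div_iff₀ (by linarith)] at hfix
    nlinarith
  exact tendsto_of_le_liminf_of_limsup_le
    (le_liminf_of_le hbdd.isCoboundedUnder_ge (Eventually.of_forall h0)) hΛ hbdd hbdd'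

section Asymptotics

variable {G : ℕ → ℕ} {A : ℕ} {g : ℕ → ℂ} {ℓ : ℂ}

theorem IsBlockMultiplicative.norm_partialSum_le_of_forall_ge (hG : IsBoundedRatioScale G A)
    (hg : IsBlockMultiplicative G g) (hbd : ∀ n, ‖g n‖ ≤ 1) {L : ℝ} (hL : 0 ≤ L) {J : ℕ}
    (hJ : ∀ k ≥ J, ‖partialSum g (G k)‖ ≤ L * G k) (M : ℕ) :
    ‖partialSum g M‖ ≤ L * M + G J := by
  induction M using Nat.strong_induction_on with
  | _ M ih =>
  rcases lt_or_ge M (G J) with hM | hM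
  · have : (M : ℝ) ≤ G J := by exact_mod_cast hM.le
    nlinarith [norm_partialSum_le hbd M, (M.cast_nonneg : (0 : ℝ) ≤ M)]
  obtain ⟨K, hJK, E, x, hE, hx, rfl, hN⟩ := hG.exists_mul_add_eq hM
  have hxM : x < E * G K + x := by have := Nat.mul_pos hE (hG.pos K); omega
  rw [hg.partialSum_mul_add hx hN.le]
  calc ‖blockSum G g K E * partialSum g (G K) + g (E * G K) * partialSum g x‖
      ≤ E * (L * G K) + 1 * (L * x + G J) := by
        refine (norm_add_le _ _).trans (add_le_add ?_ ?_) <;> rw [norm_mul]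
        · exact mul_le_mul (norm_blockSum_le hbd K E) (hJ K hJK) (norm_nonneg _) (by positivity)
        · exact mul_le_mul (hbd _) (ih x hxM) (norm_nonneg _) zero_le_one
    _ = L * ↑(E * G K + x) + G J := by push_cast; ring

theorem eventually_sub_le_norm_blockSum (hG : IsBoundedRatioScale G A)
    (hg : IsBlockMultiplicative G g) (hbd : ∀ n, ‖g n‖ ≤ 1)
    (hD : ∀ ε > 0, ∀ᶠ k in atTop, discrepancy g ℓ (G k) ≤ ε * G k) (hℓ : ℓ ≠ 0)
    {η : ℝ} (hη : 0 < η) :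
    ∀ᶠ k in atTop, ∀ E R, R < G k → E * G k + R = G (k + 1) →
      (E : ℝ) - η ≤ ‖blockSum G g k E‖ := by
  have hℓ' : 0 < ‖ℓ‖ := norm_pos_iff.mpr hℓ
  set δ := η * ‖ℓ‖ / (2 * A + 2) with hδ_def
  have hδ : 0 < δ := by positivity
  have hηδ : (2 * A + 2) * δ = η * ‖ℓ‖ := by rw [hδ_def]; field_simp
  obtain ⟨J, hJ⟩ := eventually_atTop.mp (hD δ hδ)
  simp only [discrepancy] at hJ
  have hS : ∀ k ≥ J, ‖partialSum g (G k)‖ ≤ (‖ℓ‖ + δ) * G k := fun k hk => by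
    have := norm_sub_norm_le (partialSum g (G k)) (ℓ * G k)
    rw [norm_mul, Complex.norm_natCast] at this
    linarith [hJ k hk]
  have hunif := hg.norm_partialSum_le_of_forall_ge hG hbd (by positivity) hS
  filter_upwards [eventually_ge_atTop J, hG.eventually_le_mul hδ (G J)] with k hk hGJ E R hR hER
  have hGk : (0 : ℝ) < G k := by exact_mod_cast hG.pos k
  have hsplit := hg.partialSum_mul_add hR hER.le
  rw [hER] at hsplit
  have hcast : (G (k + 1) : ℝ) = E * G k + R := by exact_mod_cast hER.symm
  have hEA : (E : ℝ) ≤ A := by exact_mod_cast hG.le_of_mul_le (k := k) (by omega)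
  have hGA : (G (k + 1) : ℝ) ≤ A * G k := by exact_mod_cast hG.succ_le k
  have hRG : (R : ℝ) ≤ G k := by exact_mod_cast hR.le
  have hlower : ‖ℓ‖ * G (k + 1) ≤ ‖partialSum g (G (k + 1))‖ + δ * G (k + 1) := by
    have := norm_sub_norm_le (ℓ * G (k + 1)) (partialSum g (G (k + 1)))
    rw [norm_mul, Complex.norm_natCast, norm_sub_rev] at this
    linarith [hJ (k + 1) (by omega)]
  have hupper : ‖partialSum g (G (k + 1))‖ ≤
      ‖blockSum G g k E‖ * ((‖ℓ‖ + δ) * G k) + ((‖ℓ‖ + δ) * R + G J) := by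
    rw [hsplit]
    refine (norm_add_le _ _).trans (add_le_add ?_ ?_) <;> rw [norm_mul]
    · exact mul_le_mul_of_nonneg_left (hS k hk) (norm_nonneg _)
    · exact (mul_le_mul_of_nonneg_right (hbd _) (norm_nonneg _)).trans
        (by rw [one_mul]; exact hunif R)
  have hkey : ‖ℓ‖ * E ≤ ‖blockSum G g k E‖ * (‖ℓ‖ + δ) + (A + 2) * δ := by
    refine le_of_mul_le_mul_right ?_ hGk
    nlinarith [mul_le_mul_of_nonneg_left hRG hδ.le, mul_le_mul_of_nonneg_left hGA hδ.le]
  refine le_of_mul_le_mul_right ?_ (by positivity : 0 < ‖ℓ‖ + δ)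
  nlinarith [mul_le_mul_of_nonneg_right hEA hδ.le, mul_pos hη hδ]

-- The factor `ℓ` makes the statement trivial for `ℓ = 0`, so that case needs no separate argument.
theorem eventually_norm_sub_one_mul_le (hG : IsBoundedRatioScale G A)
    (hg : IsBlockMultiplicative G g) (hbd : ∀ n, ‖g n‖ ≤ 1) (hℓ : ‖ℓ‖ ≤ 1)
    (hD : ∀ ε > 0, ∀ᶠ k in atTop, discrepancy g ℓ (G k) ≤ ε * G k)
    {ε : ℝ} (hε : 0 < ε) :
    ∀ᶠ k in atTop, ∀ c, (c + 1) * G k ≤ G (k + 1) → ‖(g (c * G k) - 1) * ℓ‖ ≤ ε := by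
  rcases eq_or_ne ℓ 0 with rfl | hℓ0
  · exact Eventually.of_forall fun _ _ _ => by simpa using hε.le
  filter_upwards [eventually_sub_le_norm_blockSum hG hg hbd hD hℓ0
    (by positivity : 0 < ε ^ 2 / 4)] with k hk c hc
  rcases Nat.eq_zero_or_pos c with rfl | hc0
  · simp [hg.map_zero, hε.le]
  have hσ := hk _ _ (Nat.mod_lt _ (hG.pos k)) (Nat.div_add_mod' (G (k + 1)) (G k))
  have hcE : c < G (k + 1) / G k := Nat.lt_of_succ_le ((Nat.le_div_iff_mul_le (hG.pos k)).mpr hc)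
  have hnear := hσ.trans (norm_blockSum_le_norm_add hbd hg.map_zero hc0 hcE)
  set w := g (c * G k)
  have hw : ‖1 + w‖ ≤ 2 :=
    (norm_add_le _ _).trans (by rw [norm_one]; linarith [hbd (c * G k)])
  have hpar := parallelogram_law_with_norm ℝ (1 : ℂ) w
  rw [norm_one] at hpar
  have hsq : ‖w - 1‖ ^ 2 ≤ ε ^ 2 := by
    rw [norm_sub_rev]
    nlinarith [hbd (c * G k), norm_nonneg w, norm_nonneg (1 + w)]
  rw [norm_mul]
  exact (mul_le_mul ((pow_le_pow_iff_left₀ (norm_nonneg _) hε.le two_ne_zero).mp hsq) hℓ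
    (norm_nonneg _) hε.le).trans_eq (mul_one ε)

theorem eventually_norm_sub_one_mul_mul_le (hG : IsBoundedRatioScale G A)
    (hg : IsBlockMultiplicative G g) (hbd : ∀ n, ‖g n‖ ≤ 1) (hℓ : ‖ℓ‖ ≤ 1)
    (hD : ∀ ε > 0, ∀ᶠ k in atTop, discrepancy g ℓ (G k) ≤ ε * G k)
    {ε : ℝ} (hε : 0 < ε) :
    ∀ᶠ k in atTop, ∀ E R, R < G k → E * G k + R = G (k + 1) →
      ‖(g (E * G k) - 1) * ℓ‖ * R ≤ discrepancy g ℓ R + ε * G k := by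
  have hA : (0 : ℝ) < A := by exact_mod_cast hG.ratio_pos
  set δ := ε / (3 * A) with hδ_def
  have hδ : 0 < δ := by positivity
  have hδA : 3 * A * δ = ε := by rw [hδ_def]; field_simp
  filter_upwards [eventually_norm_sub_one_mul_le hG hg hbd hℓ hD hδ, hD δ hδ,
    (tendsto_add_atTop_nat 1).eventually (hD δ hδ)] with k hgc hDk hDk₁ E R hR hER
  have hEA : (E : ℝ) ≤ A := by exact_mod_cast hG.le_of_mul_le (k := k) (by omega)
  have hGA : (G (k + 1) : ℝ) ≤ A * G k := by exact_mod_cast hG.succ_le k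
  have hblock := norm_blockSum_mul_sub_le (E := E) hbd (fun c hc => hgc c (by
    have := Nat.mul_le_mul_right (G k) (show c + 1 ≤ E from hc); omega)) hDk
  have hsplit := hg.partialSum_mul_add hR hER.le
  rw [hER] at hsplit
  have hid : (g (E * G k) - 1) * ℓ * R = g (E * G k) * (ℓ * R - partialSum g R) +
      ((partialSum g (G (k + 1)) - ℓ * G (k + 1)) -
        (blockSum G g k E * partialSum g (G k) - ℓ * E * G k)) := by
    rw [hsplit, ← hER]; push_cast; ring
  calc ‖(g (E * G k) - 1) * ℓ‖ * R = ‖(g (E * G k) - 1) * ℓ * R‖ := by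
        rw [norm_mul _ (R : ℂ), Complex.norm_natCast]
    _ ≤ 1 * discrepancy g ℓ R + (δ * G (k + 1) + E * (2 * δ * G k)) := by
        rw [hid]
        refine (norm_add_le _ _).trans
          (add_le_add ?_ ((norm_sub_le _ _).trans (add_le_add hDk₁ hblock)))
        rw [norm_mul, discrepancy, norm_sub_rev]
        exact mul_le_mul_of_nonneg_right (hbd _) (norm_nonneg _)
    _ ≤ discrepancy g ℓ R + ε * G k := by
        have hGk : (0 : ℝ) ≤ G k := Nat.cast_nonneg _
        nlinarith [mul_le_mul_of_nonneg_left hGA hδ.le,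
          mul_le_mul_of_nonneg_right hEA (by positivity : (0 : ℝ) ≤ 2 * δ * G k)]

theorem eventually_discrepancy_le_contraction (hG : IsBoundedRatioScale G A)
    (hg : IsBlockMultiplicative G g) (hbd : ∀ n, ‖g n‖ ≤ 1) (hℓ : ‖ℓ‖ ≤ 1)
    (hD : ∀ ε > 0, ∀ᶠ k in atTop, discrepancy g ℓ (G k) ≤ ε * G k)
    {μ : ℝ} (hμ : 0 < μ) (hμ2 : μ ≤ 2) (h : ∀ᶠ N in atTop, discrepancy g ℓ N ≤ μ * N)
    {ε : ℝ} (hε : 0 < ε) :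
    ∀ᶠ N in atTop, discrepancy g ℓ N ≤ (2 * μ / (μ + 2) + ε) * N := by
  obtain ⟨C, hC0, hC⟩ : ∃ C, 0 ≤ C ∧ ∀ N, discrepancy g ℓ N ≤ μ * N + C := by
    obtain ⟨N₀, hN₀⟩ := eventually_atTop.mp h
    refine ⟨2 * N₀, by positivity, fun N => ?_⟩
    rcases le_or_gt N₀ N with hN | hN
    · linarith [hN₀ N hN, (N₀.cast_nonneg : (0 : ℝ) ≤ N₀)]
    · have : (N : ℝ) ≤ N₀ := by exact_mod_cast hN.le
      nlinarith [discrepancy_le hbd hℓ N, (N.cast_nonneg : (0 : ℝ) ≤ N)]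
  set δ := ε / (2 * A + 3) with hδ_def
  have hδ : 0 < δ := by positivity
  have hδA : (2 * A + 3) * δ = ε := by rw [hδ_def]; field_simp
  obtain ⟨K₀, hK₀⟩ := eventually_atTop.mp
    ((eventually_norm_sub_one_mul_le hG hg hbd hℓ hD hδ).and
      ((eventually_norm_sub_one_mul_mul_le hG hg hbd hℓ hD hδ).and
        ((hD δ hδ).and (hG.eventually_le_mul hδ C))))
  filter_upwards [eventually_ge_atTop (G K₀)] with N hN
  obtain ⟨K, hK, E, x, hE, hx, rfl, hN'⟩ := hG.exists_mul_add_eq hN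
  obtain ⟨hgc, hlast, hDK, hCK⟩ := hK₀ K hK
  have hGK : (0 : ℝ) ≤ G K := Nat.cast_nonneg _
  have hEA : (E : ℝ) ≤ A := by exact_mod_cast hG.le_of_mul_le (k := K) (by omega)
  have hxG : (x : ℝ) ≤ G K := by exact_mod_cast hx.le
  have hblock : ‖blockSum G g K E * partialSum g (G K) - ℓ * E * G K‖ ≤ 2 * A * δ * G K :=
    (norm_blockSum_mul_sub_le (E := E) hbd (fun c hc => hgc c (by
      have := Nat.mul_le_mul_right (G K) (show c + 1 ≤ E from hc); omega)) hDK).trans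
      (by nlinarith [mul_le_mul_of_nonneg_right hEA (by positivity : (0 : ℝ) ≤ 2 * δ * G K)])
  have hsplit := hg.discrepancy_mul_add_le (ℓ := ℓ) hbd hx hN'.le
  have hCx := hC x
  suffices hmain : discrepancy g ℓ (E * G K + x) ≤
      2 * μ / (μ + 2) * (G K + x) + (2 * A + 3) * δ * G K by
    have hE' : (1 : ℝ) ≤ E := by exact_mod_cast hE
    have hN1 : (G K : ℝ) + x ≤ ↑(E * G K + x) := by push_cast; nlinarith
    have hθ : 0 ≤ 2 * μ / (μ + 2) := by positivity
    rw [hδA] at hmain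
    nlinarith [mul_le_mul_of_nonneg_left hN1 hθ, mul_le_mul_of_nonneg_left hN1 hε.le]
  rcases le_or_gt ((E + 1) * G K) (G (K + 1)) with hnext | hmax
  · have hlastdigit : ‖(g (E * G K) - 1) * ℓ‖ * x ≤ δ * G K :=
      mul_le_mul (hgc E hnext) hxG (Nat.cast_nonneg _) hδ.le
    have := mul_le_contraction_mul hμ hμ2 (Nat.cast_nonneg x) hxG
    nlinarith
  · obtain ⟨R, hR⟩ : ∃ R, E * G K + R = G (K + 1) := ⟨G (K + 1) - E * G K, by omega⟩
    have hRK : R < G K := by rw [add_mul, one_mul] at hmax; omega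
    have hxR : x < R := by omega
    have hw := mul_le_mul_add_of_mul_le (μ := μ) (c := C + δ * G K) (Nat.cast_nonneg x)
      (by exact_mod_cast hxR.le) (by positivity) ((hlast E R hRK hR).trans (by linarith [hC R]))
    have h₁ : discrepancy g ℓ (E * G K + x) ≤ 2 * μ * x + (2 * A + 3) * δ * G K := by
      nlinarith
    have h₂ : discrepancy g ℓ (E * G K + x) ≤ 2 * (R - x) + (2 * A + 3) * δ * G K := by
      have habs := (abs_le.mp (abs_discrepancy_sub_le hbd hℓ (ℓ := ℓ) hN'.le)).1
      have hDK₁ := (hK₀ (K + 1) (by omega)).2.2.1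
      have hGA : (G (K + 1) : ℝ) ≤ A * G K := by exact_mod_cast hG.succ_le K
      have hcast : (G (K + 1) : ℝ) - ↑(E * G K + x) = R - x := by
        rw [← hR]; push_cast; ring
      rw [hcast] at habs
      nlinarith [mul_le_mul_of_nonneg_left hGA hδ.le]
    exact le_contraction_mul_add hμ (by exact_mod_cast hRK.le) h₁ h₂

theorem tendsto_inv_mul_partialSum (hG : IsBoundedRatioScale G A)
    (hg : IsBlockMultiplicative G g) (hbd : ∀ n, ‖g n‖ ≤ 1)
    (hlim : Tendsto (fun k => (G k : ℂ)⁻¹ * partialSum g (G k)) atTop (𝓝 ℓ)) :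
    Tendsto (fun N : ℕ => (N : ℂ)⁻¹ * partialSum g N) atTop (𝓝 ℓ) := by
  have hℓ : ‖ℓ‖ ≤ 1 := le_of_tendsto' hlim.norm fun k => norm_inv_mul_partialSum_le hbd _
  have hD : ∀ ε > 0, ∀ᶠ k in atTop, discrepancy g ℓ (G k) ≤ ε * G k := fun ε hε => by
    filter_upwards [(tendsto_iff_norm_sub_tendsto_zero.mp hlim).eventually (ge_mem_nhds hε)]
      with k hk
    rwa [← discrepancy_div_eq (hG.pos k).ne', div_le_iff₀ (by exact_mod_cast hG.pos k)] at hk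
  have hu : Tendsto (fun N : ℕ => discrepancy g ℓ N / N) atTop (𝓝 0) := by
    refine tendsto_zero_of_eventually_le_contraction
      (fun N => div_nonneg (norm_nonneg _) N.cast_nonneg)
      (fun N => div_le_of_le_mul₀ N.cast_nonneg zero_le_two (discrepancy_le hbd hℓ N))
      fun μ hμ hμ2 h ε hε => ?_
    have h' : ∀ᶠ N in atTop, discrepancy g ℓ N ≤ μ * N := by
      filter_upwards [h, eventually_gt_atTop 0] with N hN hN0
      rwa [div_le_iff₀ (by exact_mod_cast hN0)] at hN
    filter_upwards [eventually_discrepancy_le_contraction hG hg hbd hℓ hD hμ hμ2 h' hε,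
      eventually_gt_atTop 0] with N hN hN0
    rwa [div_le_iff₀ (by exact_mod_cast hN0)]
  refine tendsto_iff_norm_sub_tendsto_zero.mpr (hu.congr' ?_)
  filter_upwards [eventually_gt_atTop 0] with N hN using discrepancy_div_eq hN.ne'

end Asymptotics

/-- Transfer of mean values: for a `G`-multiplicative `g` with `|g| ≤ 1`, if the means along
`G_k` converge to `ℓ`, then the Cesàro means converge to `ℓ` as well. -/
theorem mean_transfer (B : LRB) (g : ℕ → ℂ) (hg : GMultiplicative B g)
    (hbd : ∀ n, ‖g n‖ ≤ 1) (ℓ : ℂ)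
    (hlim : Filter.Tendsto (fun k : ℕ => (B.G k : ℂ)⁻¹ * ∑ n ∈ Finset.range (B.G k), g n)
      Filter.atTop (nhds ℓ)) :
    Filter.Tendsto (fun N : ℕ => (N : ℂ)⁻¹ * ∑ n ∈ Finset.range N, g n)
      Filter.atTop (nhds ℓ) :=
  tendsto_inv_mul_partialSum B.isBoundedRatioScale hg.isBlockMultiplicative hbd hlim
end
end

section
/- Let η > 0 and let (a_n)_{n≥1} be a sequence of real numbers such that for every τ ∈ (0, η] one has ‖τ·a_n‖_{ℝ/ℤ} → 0 as n → ∞. Then a_n → 0 as n → ∞. -/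
/-!
By Baire's theorem applied to the closed sets `{τ | ‖τ aₙ‖ ≤ 1/4 for all n ≥ N}` covering `(0, η)`,
one of them contains an interval `[α, α + δ]`. For `n ≥ N` the interval `[α aₙ, (α + δ) aₙ]` then
contains no half-integer, so `|aₙ| δ < 1`. Taking `τ ≤ δ / 2` gives `|τ aₙ| < 1/2`, hence
`round (τ aₙ) = 0` and `‖τ aₙ‖ = |τ aₙ|` for `n ≥ N`, so `τ aₙ → 0`.
-/

open Filter Topology

theorem IsOpen.exists_isOpen_subset_uniformly_eventually_le {X : Type*} [TopologicalSpace X]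
    [BaireSpace X] {s : Set X} (hs : IsOpen s) (hne : s.Nonempty) {g : ℕ → X → ℝ}
    (hg : ∀ n, Continuous (g n)) {c : ℝ} (h : ∀ x ∈ s, ∀ᶠ n in atTop, g n x ≤ c) :
    ∃ N, ∃ U, IsOpen U ∧ U.Nonempty ∧ U ⊆ s ∧ ∀ x ∈ U, ∀ n ≥ N, g n x ≤ c := by
  have : BaireSpace s := hs.baireSpace
  have : Nonempty s := hne.to_subtype
  let F : ℕ → Set s := fun N => ⋂ n ≥ N, {x | g n x ≤ c}
  have hF : ∀ N, IsClosed (F N) := fun N =>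
    isClosed_biInter fun n _ => isClosed_le ((hg n).comp continuous_subtype_val) continuous_const
  have hcover : ⋃ N, F N = Set.univ := Set.eq_univ_of_forall fun x => by
    obtain ⟨N, hN⟩ := eventually_atTop.1 (h x x.2)
    exact Set.mem_iUnion.2 ⟨N, Set.mem_iInter₂.2 hN⟩
  obtain ⟨N, x, hx⟩ := nonempty_interior_of_iUnion_of_closed hF hcover
  refine ⟨N, (↑) '' interior (F N), hs.isOpenMap_subtype_val _ isOpen_interior,
    ⟨x, x, hx, rfl⟩, Subtype.coe_image_subset _ _, ?_⟩
  rintro _ ⟨y, hy, rfl⟩ n hn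
  exact Set.mem_iInter₂.1 (interior_subset hy) n hn

lemma exists_intCast_add_half_mem_uIcc {x y : ℝ} (h : 1 ≤ |y - x|) :
    ∃ k : ℤ, (k + 1 / 2 : ℝ) ∈ Set.uIcc x y := by
  rw [← max_sub_min_eq_abs] at h
  refine ⟨⌈min x y - 1 / 2⌉, ?_, ?_⟩
  · linarith [Int.le_ceil (min x y - 1 / 2)]
  · linarith [Int.ceil_lt_add_one (min x y - 1 / 2)]

lemma abs_intCast_add_half_sub_round (k : ℤ) :
    |(k + 1 / 2 : ℝ) - round (k + 1 / 2 : ℝ)| = 1 / 2 := by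
  rw [round_intCast_add, show round (1 / 2 : ℝ) = 1 by norm_num [round_eq]]
  push_cast
  norm_num [abs_of_neg]

lemma abs_mul_lt_one_of_forall_abs_sub_round_lt_half {α δ b : ℝ} (hδ : 0 ≤ δ)
    (h : ∀ τ ∈ Set.Icc α (α + δ), |τ * b - round (τ * b)| < 1 / 2) : |b| * δ < 1 := by
  by_contra! hb
  obtain ⟨k, hk⟩ := exists_intCast_add_half_mem_uIcc (x := α * b) (y := (α + δ) * b) <| by
    rwa [← sub_mul, add_sub_cancel_left, abs_mul, abs_of_nonneg hδ, mul_comm]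
  rw [← Set.image_mul_const_uIcc, Set.uIcc_of_le (le_add_of_nonneg_right hδ)] at hk
  obtain ⟨τ, hτ, hτk⟩ := hk
  have := h τ hτ
  rw [show τ * b = k + 1 / 2 from hτk, abs_intCast_add_half_sub_round] at this
  exact this.false

lemma tendsto_zero_of_tendsto_abs_sub_round {a : ℕ → ℝ} {τ : ℝ} (hτ : τ ≠ 0)
    (hsmall : ∀ᶠ n in atTop, |τ * a n| < 1 / 2)
    (h : Tendsto (fun n => |τ * a n - round (τ * a n)|) atTop (𝓝 0)) :
    Tendsto a atTop (𝓝 0) := by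
  have hround : ∀ᶠ n in atTop, round (τ * a n) = 0 := hsmall.mono fun n hn =>
    round_eq_zero_iff.2 ⟨by linarith [(abs_lt.1 hn).1], (abs_lt.1 hn).2⟩
  have hτa : Tendsto (fun n => τ * a n) atTop (𝓝 0) := by
    rw [tendsto_zero_iff_abs_tendsto_zero]
    exact h.congr' (hround.mono fun n hn => by simp [hn])
  simpa [hτ] using hτa.const_mul τ⁻¹

/-- Diophantine lemma: if `‖τ aₙ‖_{ℝ/ℤ} → 0` for every `τ ∈ (0, η]`, then `aₙ → 0`.
Here the distance to the nearest integer is `|x - round x|`. -/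
theorem diophantine_lemma (η : ℝ) (hη : 0 < η) (a : ℕ → ℝ)
    (h : ∀ τ : ℝ, 0 < τ → τ ≤ η →
      Filter.Tendsto (fun n : ℕ => |τ * a n - (round (τ * a n) : ℝ)|)
        Filter.atTop (nhds 0)) :
    Filter.Tendsto a Filter.atTop (nhds 0) := by
  have hcont : ∀ n, Continuous fun τ : ℝ => ‖((τ * a n : ℝ) : UnitAddCircle)‖ := fun n =>
    continuous_norm.comp ((AddCircle.continuous_mk' 1).comp (continuous_mul_const _))
  obtain ⟨N, U, hUo, ⟨α, hαU⟩, -, hU⟩ :=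
    isOpen_Ioo.exists_isOpen_subset_uniformly_eventually_le (Set.nonempty_Ioo.2 hη) hcont
      (c := 1 / 4) fun τ hτ => by
        simpa only [UnitAddCircle.norm_eq] using
          (h τ hτ.1 hτ.2.le).eventually (ge_mem_nhds (by norm_num))
  obtain ⟨δ, hδ0, hIcc⟩ : ∃ δ > 0, Set.Icc α (α + δ) ⊆ U := by
    obtain ⟨l, u, ⟨hlα, hαu⟩, hlu⟩ := mem_nhds_iff_exists_Ioo_subset.1 (hUo.mem_nhds hαU)
    exact ⟨(u - α) / 2, by linarith, (Set.Icc_subset_Ioo hlα (by linarith)).trans hlu⟩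
  have hbound : ∀ n ≥ N, |a n| * δ < 1 := fun n hn =>
    abs_mul_lt_one_of_forall_abs_sub_round_lt_half hδ0.le fun τ hτ => by
      have := hU τ (hIcc hτ) n hn
      rw [UnitAddCircle.norm_eq] at this
      linarith
  set τ := min η (δ / 2)
  have hτ0 : 0 < τ := lt_min hη (half_pos hδ0)
  refine tendsto_zero_of_tendsto_abs_sub_round hτ0.ne' ?_ (h τ hτ0 (min_le_left _ _))
  filter_upwards [eventually_ge_atTop N] with n hn
  rw [abs_mul, abs_of_pos hτ0]
  nlinarith [hbound n hn, min_le_right η (δ / 2), abs_nonneg (a n)]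
end
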